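/- (DAPO decomposition.) Let Ω, r, p, μ⁺, μ⁻, μ, A, ρ be as in the mixture setup, assume the length function o ↦ (ρ o).length is μ-integrable and set L = ∫ (ρ o).length dμ(o) (so L ≥ 1). Let ε_low, ε_high ≥ 0. Define s⁺(o) = (1/L)·Σ_{x ∈ ρ o} min(x, 1+ε_high), s⁻(o) = (1/L)·Σ_{x ∈ ρ o} max(x, 1−ε_low), and G(o) = (1/L)·Σ_{x ∈ ρ o} min(x·A(o), clip(x, 1−ε_low, 1+ε_high)·A(o)). If G is μ-integrable, s⁺ is μ⁺-integrable and s⁻ is μ⁻-integrable, then ∫ G dμ = √(p(1−p)) · ( ∫ s⁺ dμ⁺ − ∫ s⁻ dμ⁻ ). -/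

import Mathlib

/-!
On a correct output the advantage `A > 0` is a constant factor, and `min (x·A, clip(x)·A)` becomes
`A · min x (1 + ε_high)`: the lower clip is irrelevant once a minimum with `x` is taken. On an
incorrect output `A < 0` turns the minimum into a maximum, leaving `A · max x (1 - ε_low)`.
Integrating over the mixture, the weights `p` and `1 - p` combine with the two advantages to the
common factor `p √((1-p)/p) = (1-p) √(p/(1-p)) = √(p(1-p))`.
-/

open MeasureTheory

/-- The clipping operator used in PPO-style RL objectives. -/
noncomputable def clip (x a b : ℝ) : ℝ := max a (min x b)

lemma min_clip {x a b : ℝ} (hab : a ≤ b) : min x (clip x a b) = min x b := by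
  unfold clip; grind

lemma max_clip {x a b : ℝ} (hab : a ≤ b) : max x (clip x a b) = max x a := by
  unfold clip; grind

lemma sum_map_min_mul_clip_of_nonneg (l : List ℝ) {a b c : ℝ} (hab : a ≤ b) (hc : 0 ≤ c) :
    (l.map fun x => min (x * c) (clip x a b * c)).sum = c * (l.map fun x => min x b).sum := by
  simp_rw [← min_mul_of_nonneg _ _ hc, min_clip hab, mul_comm _ c]
  exact List.sum_map_mul_left _ _ _

lemma sum_map_min_mul_clip_of_nonpos (l : List ℝ) {a b c : ℝ} (hab : a ≤ b) (hc : c ≤ 0) :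
    (l.map fun x => min (x * c) (clip x a b * c)).sum = c * (l.map fun x => max x a).sum := by
  simp_rw [← (antitone_mul_right hc).map_max, max_clip hab, mul_comm _ c]
  exact List.sum_map_mul_left _ _ _

lemma integral_ofReal_smul_add_ofReal_smul {Ω E : Type*} [MeasurableSpace Ω]
    [NormedAddCommGroup E] [NormedSpace ℝ E] {μ ν : Measure Ω} {f : Ω → E} {p q : ℝ}
    (hp : 0 ≤ p) (hq : 0 ≤ q) (hf : Integrable f (ENNReal.ofReal p • μ + ENNReal.ofReal q • ν)) :
    ∫ x, f x ∂(ENNReal.ofReal p • μ + ENNReal.ofReal q • ν) =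
      p • ∫ x, f x ∂μ + q • ∫ x, f x ∂ν := by
  obtain ⟨hfμ, hfν⟩ := integrable_add_measure.mp hf
  rw [integral_add_measure hfμ hfν, integral_smul_measure, integral_smul_measure,
    ENNReal.toReal_ofReal hp, ENNReal.toReal_ofReal hq]

lemma mul_sqrt_div_eq_sqrt_mul {a : ℝ} (ha : 0 < a) (b : ℝ) : a * √(b / a) = √(a * b) := by
  rw [← Real.sqrt_sq ha.le, ← Real.sqrt_mul (sq_nonneg a), Real.sqrt_sq ha.le]
  congr 1
  field_simp

theorem stmt_9_general {Ω : Type*} [MeasurableSpace Ω]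
    (r : Ω → Bool) (hr : Measurable r)
    (p : ℝ) (hp : p ∈ Set.Ioo (0 : ℝ) 1)
    (μpos μneg : Measure Ω) [IsProbabilityMeasure μpos] [IsProbabilityMeasure μneg]
    (hpos : μpos {o | r o = true} = 1) (hneg : μneg {o | r o = false} = 1)
    (μ : Measure Ω)
    (hμ : μ = ENNReal.ofReal p • μpos + ENNReal.ofReal (1 - p) • μneg)
    (A : Ω → ℝ)
    (hA : ∀ o, A o = if r o then Real.sqrt ((1 - p) / p) else -Real.sqrt (p / (1 - p)))
    (ρ : Ω → List ℝ)
    (L : ℝ)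
    (εlow εhigh : ℝ) (hεlow : 0 ≤ εlow) (hεhigh : 0 ≤ εhigh)
    (sp sm G : Ω → ℝ)
    (hsp : ∀ o, sp o = (1 / L) * ((ρ o).map (fun x => min x (1 + εhigh))).sum)
    (hsm : ∀ o, sm o = (1 / L) * ((ρ o).map (fun x => max x (1 - εlow))).sum)
    (hG : ∀ o, G o = (1 / L) *
      ((ρ o).map (fun x => min (x * A o) (clip x (1 - εlow) (1 + εhigh) * A o))).sum)
    (hGint : Integrable G μ) :
    ∫ o, G o ∂μ =
      Real.sqrt (p * (1 - p)) * ((∫ o, sp o ∂μpos) - ∫ o, sm o ∂μneg) := by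
  obtain ⟨hp0, hp1⟩ := hp
  have hab : 1 - εlow ≤ 1 + εhigh := by linarith
  have hG_pos : ∀ᵐ o ∂μpos, G o = √((1 - p) / p) * sp o := by
    filter_upwards [(mem_ae_iff_prob_eq_one (hr (measurableSet_singleton true))).2 hpos]
      with o (ho : r o = true)
    rw [hG, hsp, hA, if_pos ho,
      sum_map_min_mul_clip_of_nonneg _ hab (Real.sqrt_nonneg _)]
    ring
  have hG_neg : ∀ᵐ o ∂μneg, G o = -√(p / (1 - p)) * sm o := by
    filter_upwards [(mem_ae_iff_prob_eq_one (hr (measurableSet_singleton false))).2 hneg]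
      with o (ho : r o = false)
    rw [hG, hsm, hA, if_neg (by simp [ho]),
      sum_map_min_mul_clip_of_nonpos _ hab (neg_nonpos.2 (Real.sqrt_nonneg _))]
    ring
  have hw_pos : p * √((1 - p) / p) = √(p * (1 - p)) := mul_sqrt_div_eq_sqrt_mul hp0 _
  have hw_neg : (1 - p) * √(p / (1 - p)) = √(p * (1 - p)) := by
    rw [mul_comm p]
    exact mul_sqrt_div_eq_sqrt_mul (sub_pos.2 hp1) _
  subst hμ
  rw [integral_ofReal_smul_add_ofReal_smul hp0.le (sub_pos.2 hp1).le hGint,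
    integral_congr_ae hG_pos, integral_congr_ae hG_neg, integral_const_mul, integral_const_mul,
    smul_eq_mul, smul_eq_mul]
  linear_combination (∫ o, sp o ∂μpos) * hw_pos - (∫ o, sm o ∂μneg) * hw_neg

theorem stmt_9 {Ω : Type*} [MeasurableSpace Ω]
    (r : Ω → Bool) (hr : Measurable r)
    (p : ℝ) (hp : p ∈ Set.Ioo (0 : ℝ) 1)
    (μpos μneg : Measure Ω) [IsProbabilityMeasure μpos] [IsProbabilityMeasure μneg]
    (hpos : μpos {o | r o = true} = 1) (hneg : μneg {o | r o = false} = 1)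
    (μ : Measure Ω)
    (hμ : μ = ENNReal.ofReal p • μpos + ENNReal.ofReal (1 - p) • μneg)
    (A : Ω → ℝ)
    (hA : ∀ o, A o = if r o then Real.sqrt ((1 - p) / p) else -Real.sqrt (p / (1 - p)))
    (ρ : Ω → List ℝ) (hρ : ∀ o, ρ o ≠ [])
    (hlen : Integrable (fun o => ((ρ o).length : ℝ)) μ)
    (L : ℝ) (hL : L = ∫ o, ((ρ o).length : ℝ) ∂μ)
    (εlow εhigh : ℝ) (hεlow : 0 ≤ εlow) (hεhigh : 0 ≤ εhigh)
    (sp sm G : Ω → ℝ)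
    (hsp : ∀ o, sp o = (1 / L) * ((ρ o).map (fun x => min x (1 + εhigh))).sum)
    (hsm : ∀ o, sm o = (1 / L) * ((ρ o).map (fun x => max x (1 - εlow))).sum)
    (hG : ∀ o, G o = (1 / L) *
      ((ρ o).map (fun x => min (x * A o) (clip x (1 - εlow) (1 + εhigh) * A o))).sum)
    (hGint : Integrable G μ) (hspint : Integrable sp μpos) (hsmint : Integrable sm μneg) :
    ∫ o, G o ∂μ =
      Real.sqrt (p * (1 - p)) * ((∫ o, sp o ∂μpos) - ∫ o, sm o ∂μneg) :=
  stmt_9_general r hr p hp μpos μneg hpos hneg μ hμ A hA ρ L εlow εhigh hεlow hεhigh sp sm G hsp hsm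
    hG hGint
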